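/- Let d ≥ 1. Let η, σ ∈ ℝ^d with η_i > σ_i ≥ 0 for all i; let b = (b_{ij}) be a d×d real matrix with b_{ij} ≥ 0 for i ≠ j, and c = (c_{ij}) a d×d real matrix; set γ_i(x) = Σ_{j=1}^d c_{ij} x_i x_j. Let ν be a measure on ℝ^d concentrated on {z : z_j ≥ 0 for all j} with ν({0}) = 0 and ∫ |z| dν(z) < ∞, and for each i let μ_i be a measure on ℝ^d concentrated on {z : z_j ≥ 0 for all j} with μ_i({0}) = 0 and ∫ ( min(z_i, z_i²) + Σ_{j≠i} z_j ) dμ_i(z) < ∞. Define f on the open positive orthant by f(x) = 1 + Σ_{i=1}^d (x_i − log x_i), and for x with x_i > 0 for all i define Lf(x) = Σ_{i=1}^d (η_i + Σ_{j=1}^d b_{ij} x_j + γ_i(x))·(1 − 1/x_i) + Σ_{i=1}^d σ_i/x_i + ∫ ( f(x+z) − f(x) ) dν(z) + Σ_{i=1}^d x_i ∫ ( f(x+z) − f(x) − (1 − 1/x_i) z_i ) dμ_i(z). Then all the integrals are well defined, and for every m > 0 there exists a constant K > 0 such that Lf(x) ≤ K·f(x) for every x with 0 < x_i < m for all i. 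-/

import Mathlib

/-!
Write `g t = t - log t`, so `f x = 1 + ∑ g (x_i)` and every increment of `f` splits coordinatewise.
For `x > 0`, `z ≥ 0` one has `|g (x + z) - g x| ≤ (1 + 1/x) z`, and the Taylor remainder
`g (x + z) - g x - g' x z` lies between `0` and `min (x z) z² / x²`. This makes all integrands
integrable, bounds the immigration term by `∫ ∑ z_j dν`, and bounds `x_i` times the `μ_i`-integral
by `F_i (x_i) / x_i + x_i ∫ ∑_{j ≠ i} z_j dμ_i` with `F_i t = ∫ min (t z_i) z_i² dμ_i`.
By dominated convergence `F_i t → 0` as `t → 0+`, so `(F_i (x_i) - (η_i - σ_i)) / x_i`, which is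
what remains of the singular terms after adding `(σ_i - η_i) / x_i` from the drift, is bounded
above on `(0, m)`. The other drift terms are bounded on the box since `b_ij ≥ 0` for `j ≠ i`
gives `∑_j b_ij x_j / x_i ≥ b_ii`. So `Lf` is bounded above on `(0, m)^d`, where `f ≥ 1`.
-/

open MeasureTheory Real BigOperators Filter Topology Set

section SubLog

variable {x z : ℝ}

lemma log_add_sub_log_le_div (hx : 0 < x) (hz : 0 ≤ z) : log (x + z) - log x ≤ z / x := by
  have h := log_le_sub_one_of_pos (show 0 < (x + z) / x by positivity)
  rw [log_div (by positivity) hx.ne'] at h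
  calc log (x + z) - log x ≤ (x + z) / x - 1 := h
    _ = z / x := by field_simp; ring

lemma div_add_le_log_add_sub_log (hx : 0 < x) (hz : 0 ≤ z) :
    z / (x + z) ≤ log (x + z) - log x := by
  have h := one_sub_inv_le_log_of_pos (show 0 < (x + z) / x by positivity)
  rw [log_div (by positivity) hx.ne'] at h
  calc z / (x + z) = 1 - ((x + z) / x)⁻¹ := by field_simp; ring
    _ ≤ log (x + z) - log x := h

lemma sub_log_add_sub_le (hx : 0 < x) (hz : 0 ≤ z) :
    (x + z - log (x + z)) - (x - log x) ≤ z := by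
  have := log_le_log hx (le_add_of_nonneg_right hz)
  linarith

lemma abs_sub_log_add_sub_le (hx : 0 < x) (hz : 0 ≤ z) :
    |(x + z - log (x + z)) - (x - log x)| ≤ (1 + x⁻¹) * z := by
  have h₁ := sub_log_add_sub_le hx hz
  have h₂ := log_add_sub_log_le_div hx hz
  rw [abs_le]
  constructor <;> nlinarith [mul_nonneg (inv_nonneg.2 hx.le) hz, div_eq_inv_mul z x]

lemma sub_log_add_sub_sub_mul_nonneg (hx : 0 < x) (hz : 0 ≤ z) :
    0 ≤ (x + z - log (x + z)) - (x - log x) - (1 - 1 / x) * z := by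
  have h := log_add_sub_log_le_div hx hz
  have : (1 - 1 / x) * z = z - z / x := by ring
  linarith

lemma sub_log_add_sub_sub_mul_le (hx : 0 < x) (hz : 0 ≤ z) :
    (x + z - log (x + z)) - (x - log x) - (1 - 1 / x) * z ≤ min (x * z) (z ^ 2) / x ^ 2 := by
  have hlow := div_add_le_log_add_sub_log hx hz
  have hrem : (x + z - log (x + z)) - (x - log x) - (1 - 1 / x) * z
      = z / x - (log (x + z) - log x) := by ring
  rw [hrem, ← min_div_div_right (by positivity)]
  refine le_min ?_ ?_
  · have := log_le_log hx (le_add_of_nonneg_right hz)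
    calc z / x - (log (x + z) - log x) ≤ z / x := by linarith
      _ = x * z / x ^ 2 := by field_simp
  · calc z / x - (log (x + z) - log x) ≤ z / x - z / (x + z) := by linarith
      _ = z ^ 2 / (x * (x + z)) := by field_simp; ring
      _ ≤ z ^ 2 / x ^ 2 := by gcongr; nlinarith

lemma min_mul_sq_le {t : ℝ} (hz : 0 ≤ z) :
    min (t * z) (z ^ 2) ≤ max t 1 * min z (z ^ 2) := by
  rcases le_total z (z ^ 2) with h | h
  · rw [min_eq_left h]
    exact (min_le_left _ _).trans (by gcongr; exact le_max_left _ _)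
  · rw [min_eq_right h]
    exact (min_le_right _ _).trans (le_mul_of_one_le_left (sq_nonneg z) (le_max_right _ _))

end SubLog

section Measure

variable {Ω : Type*} [MeasurableSpace Ω] {μ : Measure Ω} {Z : Ω → ℝ}

lemma integrable_min_mul_sq (hZm : AEMeasurable Z μ) (hZ : ∀ᵐ ω ∂μ, 0 ≤ Z ω)
    (hint : Integrable (fun ω => min (Z ω) (Z ω ^ 2)) μ) {t : ℝ} (ht : 0 ≤ t) :
    Integrable (fun ω => min (t * Z ω) (Z ω ^ 2)) μ := by
  refine (hint.const_mul (max t 1)).mono' (by fun_prop) ?_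
  filter_upwards [hZ] with ω hω
  rw [Real.norm_eq_abs, abs_of_nonneg (le_min (mul_nonneg ht hω) (sq_nonneg _))]
  exact min_mul_sq_le hω

lemma tendsto_integral_min_mul_sq (hZm : AEMeasurable Z μ) (hZ : ∀ᵐ ω ∂μ, 0 ≤ Z ω)
    (hint : Integrable (fun ω => min (Z ω) (Z ω ^ 2)) μ) :
    Tendsto (fun t => ∫ ω, min (t * Z ω) (Z ω ^ 2) ∂μ) (𝓝[>] 0) (𝓝 0) := by
  have hlim : Tendsto (fun t => ∫ ω, min (t * Z ω) (Z ω ^ 2) ∂μ) (𝓝[>] 0)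
      (𝓝 (∫ _, (0 : ℝ) ∂μ)) :=
    tendsto_integral_filter_of_dominated_convergence _
      (Eventually.of_forall fun t => by fun_prop) ?_ hint ?_
  · simpa using hlim
  · filter_upwards [Ioo_mem_nhdsGT one_pos] with t ht
    filter_upwards [hZ] with ω hω
    rw [Real.norm_eq_abs, abs_of_nonneg (le_min (mul_nonneg ht.1.le hω) (sq_nonneg _))]
    exact min_le_min (mul_le_of_le_one_left hω ht.2.le) le_rfl
  · filter_upwards [hZ] with ω hω
    have : Tendsto (fun t => min (t * Z ω) (Z ω ^ 2)) (𝓝 0) (𝓝 (min (0 * Z ω) (Z ω ^ 2))) :=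
      ((continuous_id.mul continuous_const).min continuous_const).tendsto 0
    rw [zero_mul, min_eq_left (sq_nonneg _)] at this
    exact this.mono_left nhdsWithin_le_nhds

variable {x : ℝ}

lemma integrable_sub_log_add_sub (hZ : ∀ᵐ ω ∂μ, 0 ≤ Z ω) (hint : Integrable Z μ) (hx : 0 < x) :
    Integrable (fun ω => (x + Z ω - log (x + Z ω)) - (x - log x)) μ := by
  refine (hint.const_mul (1 + x⁻¹)).mono' ?_ ?_
  · have := hint.aemeasurable
    fun_prop
  · filter_upwards [hZ] with ω hω
    rw [Real.norm_eq_abs]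
    exact abs_sub_log_add_sub_le hx hω

lemma integral_sub_log_add_sub_le (hZ : ∀ᵐ ω ∂μ, 0 ≤ Z ω) (hint : Integrable Z μ) (hx : 0 < x) :
    ∫ ω, (x + Z ω - log (x + Z ω)) - (x - log x) ∂μ ≤ ∫ ω, Z ω ∂μ :=
  integral_mono_ae (integrable_sub_log_add_sub hZ hint hx) hint
    (hZ.mono fun _ hω => sub_log_add_sub_le hx hω)

lemma integrable_sub_log_add_sub_sub_mul (hZm : AEMeasurable Z μ) (hZ : ∀ᵐ ω ∂μ, 0 ≤ Z ω)
    (hint : Integrable (fun ω => min (Z ω) (Z ω ^ 2)) μ) (hx : 0 < x) :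
    Integrable (fun ω => (x + Z ω - log (x + Z ω)) - (x - log x) - (1 - 1 / x) * Z ω) μ :=
  integrable_of_le_of_le (by fun_prop) (hZ.mono fun _ hω => sub_log_add_sub_sub_mul_nonneg hx hω)
    (hZ.mono fun _ hω => sub_log_add_sub_sub_mul_le hx hω) (integrable_zero _ _ _)
    ((integrable_min_mul_sq hZm hZ hint hx.le).div_const _)

lemma integral_sub_log_add_sub_sub_mul_le (hZm : AEMeasurable Z μ) (hZ : ∀ᵐ ω ∂μ, 0 ≤ Z ω)
    (hint : Integrable (fun ω => min (Z ω) (Z ω ^ 2)) μ) (hx : 0 < x) :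
    ∫ ω, (x + Z ω - log (x + Z ω)) - (x - log x) - (1 - 1 / x) * Z ω ∂μ
      ≤ (∫ ω, min (x * Z ω) (Z ω ^ 2) ∂μ) / x ^ 2 := by
  rw [← integral_div]
  exact integral_mono_ae (integrable_sub_log_add_sub_sub_mul hZm hZ hint hx)
    ((integrable_min_mul_sq hZm hZ hint hx.le).div_const _)
    (hZ.mono fun _ hω => sub_log_add_sub_sub_mul_le hx hω)

end Measure

lemma exists_sub_div_le_of_tendsto {F : ℝ → ℝ} {δ m B : ℝ} (hδ : 0 < δ)
    (hF : Tendsto F (𝓝[>] 0) (𝓝 0)) (hB : ∀ t ∈ Ioo 0 m, F t ≤ B) :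
    ∃ C, ∀ t ∈ Ioo 0 m, (F t - δ) / t ≤ C := by
  obtain ⟨ε, hε : 0 < ε, hεF⟩ := mem_nhdsGT_iff_exists_Ioo_subset.1 (hF (gt_mem_nhds hδ))
  refine ⟨max B 0 / ε, fun t ht => ?_⟩
  rcases lt_or_ge t ε with htε | htε
  · have hFt : F t < δ := hεF ⟨ht.1, htε⟩
    exact (div_nonpos_of_nonpos_of_nonneg (by linarith) ht.1.le).trans (by positivity)
  · calc (F t - δ) / t ≤ max B 0 / t := by
          gcongr
          · exact ht.1.le
          · linarith [hB t ht, le_max_left B 0]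
      _ ≤ max B 0 / ε := by gcongr

section Drift

variable {ι : Type*} [Fintype ι]

lemma abs_sum_mul_le (a x : ι → ℝ) {m : ℝ} (hx : ∀ j, |x j| ≤ m) :
    |∑ j, a j * x j| ≤ m * ∑ j, |a j| := by
  rw [Finset.mul_sum]
  refine (Finset.abs_sum_le_sum_abs _ _).trans (Finset.sum_le_sum fun j _ => ?_)
  rw [abs_mul, mul_comm m]
  exact mul_le_mul_of_nonneg_left (hx j) (abs_nonneg _)

lemma exists_drift_bound [DecidableEq ι] (b c : ι → ℝ) {i : ι} (hb : ∀ j, i ≠ j → 0 ≤ b j)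
    (m : ℝ) : ∃ C, ∀ x : ι → ℝ, (∀ j, 0 < x j ∧ x j < m) →
      (∑ j, b j * x j + ∑ j, c j * x i * x j) * (1 - 1 / x i) ≤ C := by
  refine ⟨m * ∑ j, |b j| + m * (m * ∑ j, |c j|) + |b i| + m * ∑ j, |c j|, fun x hx => ?_⟩
  have hxi := (hx i).1
  have habs : ∀ j, |x j| ≤ m := fun j => abs_le.2 ⟨by linarith [hx j], (hx j).2.le⟩
  have hB := abs_sum_mul_le b x habs
  have hK := abs_sum_mul_le c x habs
  have hdiag : b i ≤ (∑ j, b j * x j) / x i := by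
    rw [le_div_iff₀ hxi, ← Finset.add_sum_erase _ _ (Finset.mem_univ i)]
    exact le_add_of_nonneg_right (Finset.sum_nonneg fun j hj =>
      mul_nonneg (hb j (Finset.ne_of_mem_erase hj).symm) (hx j).1.le)
  have hxK : x i * ∑ j, c j * x j ≤ m * (m * ∑ j, |c j|) := by
    refine (le_abs_self _).trans ?_
    rw [abs_mul]
    exact mul_le_mul (habs i) hK (abs_nonneg _) (by linarith [hx i])
  have hΓ : ∑ j, c j * x i * x j = x i * ∑ j, c j * x j := by
    rw [Finset.mul_sum]
    exact Finset.sum_congr rfl fun j _ => by ring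
  have hexpand : (∑ j, b j * x j + x i * ∑ j, c j * x j) * (1 - 1 / x i)
      = ∑ j, b j * x j + x i * ∑ j, c j * x j - (∑ j, b j * x j) / x i - ∑ j, c j * x j := by
    field_simp
    ring
  rw [hΓ, hexpand]
  linarith [le_abs_self (∑ j, b j * x j), neg_abs_le (∑ j, c j * x j), neg_abs_le (b i)]

end Drift

noncomputable def lyapunov {ι : Type*} [Fintype ι] (x : EuclideanSpace ℝ ι) : ℝ :=
  1 + ∑ i, (x i - log (x i))

section Lyapunov

variable {ι : Type*} [Fintype ι] {μ : Measure (EuclideanSpace ℝ ι)} {x : EuclideanSpace ℝ ι}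

lemma one_le_lyapunov (hx : ∀ i, 0 < x i) : 1 ≤ lyapunov x := by
  rw [lyapunov, le_add_iff_nonneg_right]
  exact Finset.sum_nonneg fun i _ => by linarith [log_le_sub_one_of_pos (hx i)]

lemma lyapunov_add_sub (x z : EuclideanSpace ℝ ι) :
    lyapunov (x + z) - lyapunov x
      = ∑ j, ((x j + z j - log (x j + z j)) - (x j - log (x j))) := by
  simp only [lyapunov, PiLp.add_apply, Finset.sum_sub_distrib]
  ring

lemma lyapunov_add_sub_sub_mul [DecidableEq ι] (x z : EuclideanSpace ℝ ι) (i : ι) :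
    lyapunov (x + z) - lyapunov x - (1 - 1 / x i) * z i
      = ((x i + z i - log (x i + z i)) - (x i - log (x i)) - (1 - 1 / x i) * z i)
        + ∑ j ∈ Finset.univ.erase i, ((x j + z j - log (x j + z j)) - (x j - log (x j))) := by
  rw [lyapunov_add_sub, ← Finset.add_sum_erase _ _ (Finset.mem_univ i)]
  ring

lemma integrable_apply_of_integrable_norm (h : Integrable (fun z => ‖z‖) μ) (j : ι) :
    Integrable (fun z : EuclideanSpace ℝ ι => z j) μ :=
  h.mono' (by fun_prop) (Eventually.of_forall fun z => PiLp.norm_apply_le z j)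

lemma integrable_lyapunov_add_sub (hx : ∀ j, 0 < x j) (hμ : ∀ᵐ z ∂μ, ∀ j, 0 ≤ z j)
    (hint : ∀ j, Integrable (fun z : EuclideanSpace ℝ ι => z j) μ) :
    Integrable (fun z => lyapunov (x + z) - lyapunov x) μ := by
  simp_rw [lyapunov_add_sub x]
  exact integrable_finsetSum _ fun j _ =>
    integrable_sub_log_add_sub (hμ.mono fun _ hz => hz j) (hint j) (hx j)

lemma integral_lyapunov_add_sub_le (hx : ∀ j, 0 < x j) (hμ : ∀ᵐ z ∂μ, ∀ j, 0 ≤ z j)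
    (hint : ∀ j, Integrable (fun z : EuclideanSpace ℝ ι => z j) μ) :
    ∫ z, (lyapunov (x + z) - lyapunov x) ∂μ ≤ ∫ z, ∑ j, z j ∂μ := by
  simp_rw [lyapunov_add_sub x]
  rw [integral_finsetSum _ fun j _ =>
      integrable_sub_log_add_sub (hμ.mono fun _ hz => hz j) (hint j) (hx j),
    integral_finsetSum _ fun j _ => hint j]
  exact Finset.sum_le_sum fun j _ =>
    integral_sub_log_add_sub_le (hμ.mono fun _ hz => hz j) (hint j) (hx j)

variable [DecidableEq ι] {i : ι}

lemma integrable_min_sq_of_integrable_add (hμ : ∀ᵐ z ∂μ, ∀ j, 0 ≤ z j)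
    (h : Integrable (fun z => min (z i) (z i ^ 2) + ∑ j ∈ Finset.univ.erase i, z j) μ) :
    Integrable (fun z : EuclideanSpace ℝ ι => min (z i) (z i ^ 2)) μ :=
  integrable_of_le_of_le (by fun_prop) (hμ.mono fun _ hz => le_min (hz i) (sq_nonneg _))
    (hμ.mono fun _ hz => le_add_of_nonneg_right (Finset.sum_nonneg fun j _ => hz j))
    (integrable_zero _ _ _) h

lemma integrable_apply_of_integrable_add (hμ : ∀ᵐ z ∂μ, ∀ j, 0 ≤ z j)
    (h : Integrable (fun z => min (z i) (z i ^ 2) + ∑ j ∈ Finset.univ.erase i, z j) μ)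
    {j : ι} (hj : j ≠ i) : Integrable (fun z : EuclideanSpace ℝ ι => z j) μ :=
  integrable_of_le_of_le (by fun_prop) (hμ.mono fun _ hz => hz j)
    (hμ.mono fun _ hz => le_add_of_nonneg_of_le (le_min (hz i) (sq_nonneg _))
      (Finset.single_le_sum (fun k _ => hz k) (Finset.mem_erase.2 ⟨hj, Finset.mem_univ j⟩)))
    (integrable_zero _ _ _) h

lemma integrable_lyapunov_add_sub_sub_mul (hx : ∀ j, 0 < x j) (hμ : ∀ᵐ z ∂μ, ∀ j, 0 ≤ z j)
    (hmin : Integrable (fun z : EuclideanSpace ℝ ι => min (z i) (z i ^ 2)) μ)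
    (hint : ∀ j, j ≠ i → Integrable (fun z : EuclideanSpace ℝ ι => z j) μ) :
    Integrable (fun z => lyapunov (x + z) - lyapunov x - (1 - 1 / x i) * z i) μ := by
  simp_rw [lyapunov_add_sub_sub_mul x _ i]
  exact (integrable_sub_log_add_sub_sub_mul (by fun_prop) (hμ.mono fun _ hz => hz i) hmin
    (hx i)).add (integrable_finsetSum _ fun j hj => integrable_sub_log_add_sub
      (hμ.mono fun _ hz => hz j) (hint j (Finset.ne_of_mem_erase hj)) (hx j))

lemma mul_integral_lyapunov_add_sub_sub_mul_le (hx : ∀ j, 0 < x j)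
    (hμ : ∀ᵐ z ∂μ, ∀ j, 0 ≤ z j)
    (hmin : Integrable (fun z : EuclideanSpace ℝ ι => min (z i) (z i ^ 2)) μ)
    (hint : ∀ j, j ≠ i → Integrable (fun z : EuclideanSpace ℝ ι => z j) μ) :
    x i * ∫ z, (lyapunov (x + z) - lyapunov x - (1 - 1 / x i) * z i) ∂μ
      ≤ (∫ z, min (x i * z i) (z i ^ 2) ∂μ) / x i
        + x i * ∫ z, ∑ j ∈ Finset.univ.erase i, z j ∂μ := by
  have hZi : ∀ᵐ z ∂μ, 0 ≤ z i := hμ.mono fun _ hz => hz i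
  have hincr : ∀ j ∈ Finset.univ.erase i, Integrable
      (fun z : EuclideanSpace ℝ ι => (x j + z j - log (x j + z j)) - (x j - log (x j))) μ :=
    fun j hj => integrable_sub_log_add_sub (hμ.mono fun _ hz => hz j)
      (hint j (Finset.ne_of_mem_erase hj)) (hx j)
  have hle : ∫ z, (lyapunov (x + z) - lyapunov x - (1 - 1 / x i) * z i) ∂μ
      ≤ (∫ z, min (x i * z i) (z i ^ 2) ∂μ) / x i ^ 2
        + ∫ z, ∑ j ∈ Finset.univ.erase i, z j ∂μ := by
    simp_rw [lyapunov_add_sub_sub_mul x _ i]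
    rw [integral_add (integrable_sub_log_add_sub_sub_mul (by fun_prop) hZi hmin (hx i))
        (integrable_finsetSum _ hincr), integral_finsetSum _ hincr,
      integral_finsetSum _ fun j hj => hint j (Finset.ne_of_mem_erase hj)]
    exact add_le_add (integral_sub_log_add_sub_sub_mul_le (by fun_prop) hZi hmin (hx i))
      (Finset.sum_le_sum fun j hj => integral_sub_log_add_sub_le (hμ.mono fun _ hz => hz j)
        (hint j (Finset.ne_of_mem_erase hj)) (hx j))
  have hxi := (hx i).ne'
  calc x i * ∫ z, (lyapunov (x + z) - lyapunov x - (1 - 1 / x i) * z i) ∂μ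
      ≤ x i * ((∫ z, min (x i * z i) (z i ^ 2) ∂μ) / x i ^ 2
        + ∫ z, ∑ j ∈ Finset.univ.erase i, z j ∂μ) := mul_le_mul_of_nonneg_left hle (hx i).le
    _ = _ := by field_simp

lemma exists_generator_summand_le {η σ : ℝ} (hησ : σ < η) (b c : ι → ℝ)
    (hb : ∀ j, i ≠ j → 0 ≤ b j) (hμ : ∀ᵐ z ∂μ, ∀ j, 0 ≤ z j)
    (hμint : Integrable (fun z => min (z i) (z i ^ 2) + ∑ j ∈ Finset.univ.erase i, z j) μ)
    (m : ℝ) : ∃ C, ∀ x : EuclideanSpace ℝ ι, (∀ j, 0 < x j ∧ x j < m) →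
      (η + ∑ j, b j * x j + ∑ j, c j * x i * x j) * (1 - 1 / x i) + σ / x i
        + x i * ∫ z, (lyapunov (x + z) - lyapunov x - (1 - 1 / x i) * z i) ∂μ ≤ C := by
  have hmin := integrable_min_sq_of_integrable_add hμ hμint
  have hZm : AEMeasurable (fun z : EuclideanSpace ℝ ι => z i) μ := by fun_prop
  have hZi : ∀ᵐ z ∂μ, 0 ≤ z i := hμ.mono fun _ hz => hz i
  obtain ⟨C₁, hC₁⟩ := exists_drift_bound b c hb m
  obtain ⟨C₂, hC₂⟩ := exists_sub_div_le_of_tendsto (sub_pos.2 hησ)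
    (tendsto_integral_min_mul_sq hZm hZi hmin) fun t ht =>
      integral_mono_ae (integrable_min_mul_sq hZm hZi hmin ht.1.le)
        (integrable_min_mul_sq hZm hZi hmin (ht.1.trans ht.2).le)
        (hZi.mono fun _ hz => min_le_min (mul_le_mul_of_nonneg_right ht.2.le hz) le_rfl)
  have hD : 0 ≤ ∫ z, ∑ j ∈ Finset.univ.erase i, z j ∂μ :=
    integral_nonneg_of_ae (hμ.mono fun _ hz => Finset.sum_nonneg fun j _ => hz j)
  refine ⟨η + C₁ + C₂ + m * ∫ z, ∑ j ∈ Finset.univ.erase i, z j ∂μ, fun x hx => ?_⟩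
  have hbranch := mul_integral_lyapunov_add_sub_sub_mul_le (fun j => (hx j).1) hμ hmin
    fun j hj => integrable_apply_of_integrable_add hμ hμint hj
  have hdrift := hC₁ x.ofLp hx
  have hcrit := hC₂ (x i) (hx i)
  have hsplit : (η + ∑ j, b j * x j + ∑ j, c j * x i * x j) * (1 - 1 / x i) + σ / x i
      = η + (∑ j, b j * x j + ∑ j, c j * x i * x j) * (1 - 1 / x i)
        + ((∫ z, min (x i * z i) (z i ^ 2) ∂μ) - (η - σ)) / x i
        - (∫ z, min (x i * z i) (z i ^ 2) ∂μ) / x i := by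
    ring
  linarith [mul_le_mul_of_nonneg_right (hx i).2.le hD]

end Lyapunov

theorem cimbi_foster_lyapunov_supercritical_general
    (d : ℕ)
    (η σ : Fin d → ℝ) (hησ : ∀ i, 0 ≤ σ i ∧ σ i < η i)
    (b c : Matrix (Fin d) (Fin d) ℝ)
    (hb : ∀ i j, i ≠ j → 0 ≤ b i j)
    (γ : EuclideanSpace ℝ (Fin d) → Fin d → ℝ)
    (hγ : ∀ (x : EuclideanSpace ℝ (Fin d)) (i : Fin d),
      γ x i = ∑ j, c i j * x i * x j)
    (ν : Measure (EuclideanSpace ℝ (Fin d)))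
    (hν : ∀ᵐ z ∂ν, ∀ j, 0 ≤ z j)
    (hνint : Integrable (fun z => ‖z‖) ν)
    (μ : Fin d → Measure (EuclideanSpace ℝ (Fin d)))
    (hμ : ∀ i, ∀ᵐ z ∂(μ i), ∀ j, 0 ≤ z j)
    (hμint : ∀ i, Integrable
      (fun z => min (z i) ((z i) ^ 2) + ∑ j ∈ Finset.univ.erase i, z j) (μ i))
    (f : EuclideanSpace ℝ (Fin d) → ℝ)
    (hf : ∀ x : EuclideanSpace ℝ (Fin d), f x = 1 + ∑ i, (x i - Real.log (x i)))
    (Lf : EuclideanSpace ℝ (Fin d) → ℝ)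
    (hLf : ∀ x : EuclideanSpace ℝ (Fin d), (∀ i, 0 < x i) →
      Lf x = ∑ i, (η i + (∑ j, b i j * x j) + γ x i) * (1 - 1 / x i)
        + ∑ i, σ i / x i
        + ∫ z, (f (x + z) - f x) ∂ν
        + ∑ i, x i * ∫ z, (f (x + z) - f x - (1 - 1 / x i) * z i) ∂(μ i)) :
    (∀ x : EuclideanSpace ℝ (Fin d), (∀ i, 0 < x i) →
      Integrable (fun z => f (x + z) - f x) ν ∧
      ∀ i, Integrable (fun z => f (x + z) - f x - (1 - 1 / x i) * z i) (μ i)) ∧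
    ∀ m > (0 : ℝ), ∃ K > (0 : ℝ), ∀ x : EuclideanSpace ℝ (Fin d),
      (∀ i, 0 < x i ∧ x i < m) → Lf x ≤ K * f x := by
  obtain rfl : f = lyapunov := funext hf
  have hνcoord := integrable_apply_of_integrable_norm hνint
  refine ⟨fun x hx => ⟨integrable_lyapunov_add_sub hx hν hνcoord, fun i =>
    integrable_lyapunov_add_sub_sub_mul hx (hμ i)
      (integrable_min_sq_of_integrable_add (hμ i) (hμint i))
      fun _ hj => integrable_apply_of_integrable_add (hμ i) (hμint i) hj⟩, fun m _ => ?_⟩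
  choose C hC using fun i =>
    exists_generator_summand_le (hησ i).2 (b i) (c i) (hb i) (hμ i) (hμint i) m
  set K₀ := ∑ i, C i + ∫ z, ∑ j, z j ∂ν
  refine ⟨max K₀ 1, zero_lt_one.trans_le (le_max_right _ _), fun x hx => ?_⟩
  have hx₀ : ∀ i, 0 < x i := fun i => (hx i).1
  calc Lf x = ∑ i, ((η i + ∑ j, b i j * x j + ∑ j, c i j * x i * x j) * (1 - 1 / x i)
          + σ i / x i + x i * ∫ z, (lyapunov (x + z) - lyapunov x - (1 - 1 / x i) * z i) ∂(μ i))
        + ∫ z, (lyapunov (x + z) - lyapunov x) ∂ν := by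
        simp only [hLf x hx₀, hγ, Finset.sum_add_distrib]
        ring
    _ ≤ K₀ := add_le_add (Finset.sum_le_sum fun i _ => hC i x hx)
        (integral_lyapunov_add_sub_le hx₀ hν hνcoord)
    _ ≤ max K₀ 1 * lyapunov x := (le_max_left _ _).trans
        (le_mul_of_one_le_right (zero_le_one.trans (le_max_right _ _)) (one_le_lyapunov hx₀))

/-- Foster–Lyapunov inequality `Lf ≤ K·f` on `(0,m)^d` for the generator of a
CIMBI process applied to `f(x) = 1 + Σᵢ (xᵢ − log xᵢ)`, in the supercritical
immigration case `ηᵢ > σᵢ`. -/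
theorem cimbi_foster_lyapunov_supercritical
    (d : ℕ) (hd : 1 ≤ d)
    (η σ : Fin d → ℝ) (hησ : ∀ i, 0 ≤ σ i ∧ σ i < η i)
    (b c : Matrix (Fin d) (Fin d) ℝ)
    (hb : ∀ i j, i ≠ j → 0 ≤ b i j)
    (γ : EuclideanSpace ℝ (Fin d) → Fin d → ℝ)
    (hγ : ∀ (x : EuclideanSpace ℝ (Fin d)) (i : Fin d),
      γ x i = ∑ j, c i j * x i * x j)
    (ν : Measure (EuclideanSpace ℝ (Fin d)))
    (hν : ∀ᵐ z ∂ν, ∀ j, 0 ≤ z j)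
    (hν0 : ν ({0} : Set (EuclideanSpace ℝ (Fin d))) = 0)
    (hνint : Integrable (fun z => ‖z‖) ν)
    (μ : Fin d → Measure (EuclideanSpace ℝ (Fin d)))
    (hμ : ∀ i, ∀ᵐ z ∂(μ i), ∀ j, 0 ≤ z j)
    (hμ0 : ∀ i, μ i ({0} : Set (EuclideanSpace ℝ (Fin d))) = 0)
    (hμint : ∀ i, Integrable
      (fun z => min (z i) ((z i) ^ 2) + ∑ j ∈ Finset.univ.erase i, z j) (μ i))
    (f : EuclideanSpace ℝ (Fin d) → ℝ)
    (hf : ∀ x : EuclideanSpace ℝ (Fin d), f x = 1 + ∑ i, (x i - Real.log (x i)))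
    (Lf : EuclideanSpace ℝ (Fin d) → ℝ)
    (hLf : ∀ x : EuclideanSpace ℝ (Fin d), (∀ i, 0 < x i) →
      Lf x = ∑ i, (η i + (∑ j, b i j * x j) + γ x i) * (1 - 1 / x i)
        + ∑ i, σ i / x i
        + ∫ z, (f (x + z) - f x) ∂ν
        + ∑ i, x i * ∫ z, (f (x + z) - f x - (1 - 1 / x i) * z i) ∂(μ i)) :
    (∀ x : EuclideanSpace ℝ (Fin d), (∀ i, 0 < x i) →
      Integrable (fun z => f (x + z) - f x) ν ∧
      ∀ i, Integrable (fun z => f (x + z) - f x - (1 - 1 / x i) * z i) (μ i)) ∧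
    ∀ m > (0 : ℝ), ∃ K > (0 : ℝ), ∀ x : EuclideanSpace ℝ (Fin d),
      (∀ i, 0 < x i ∧ x i < m) → Lf x ≤ K * f x :=
  cimbi_foster_lyapunov_supercritical_general d η σ hησ b c hb γ hγ ν hν hνint μ hμ hμint f hf Lf
    hLf
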